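/- arXiv:2402.18310 — 7 statements merged into one kernel-verified Lean document; each statement's English description precedes it below -/
import Mathlib

section
/- For every N ≥ 1, the 2N×2N exchange matrix B of the linearly oriented type A_{2N} quiver (b_{i,i+1} = 1, b_{i+1,i} = -1, all other entries 0) satisfies μ_{2N}μ_{2N-1}⋯μ₂μ₁(B) = B. -/
open Matrix

/-- Matrix mutation in direction `k` for an integer exchange matrix. -/
def matrixMutation {n : ℕ} (B : Matrix (Fin n) (Fin n) ℤ) (k : Fin n) :
    Matrix (Fin n) (Fin n) ℤ :=
  Matrix.of fun i j =>
    if i = k ∨ j = k then -B i j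
    else B i j + (|B i k| * B k j + B i k * |B k j|) / 2

/-- The exchange matrix of the linearly oriented type `A_{2N}` quiver:
`b_{i,i+1} = 1`, `b_{i+1,i} = -1`, all other entries `0`. -/
def B_A2N (N : ℕ) : Matrix (Fin (2 * N)) (Fin (2 * N)) ℤ :=
  Matrix.of fun i j =>
    if (i : ℕ) + 1 = (j : ℕ) then 1
    else if (j : ℕ) + 1 = (i : ℕ) then -1
    else 0

/-- Auxiliary: the linear `A_n`-type matrix with the edge `(k, k+1)` flipped. -/
def Xmat (n k : ℕ) : Matrix (Fin n) (Fin n) ℤ :=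
  Matrix.of fun i j =>
    if (i : ℕ) = k ∧ (j : ℕ) = k + 1 then -1
    else if (i : ℕ) = k + 1 ∧ (j : ℕ) = k then 1
    else if (i : ℕ) + 1 = (j : ℕ) then 1
    else if (j : ℕ) + 1 = (i : ℕ) then -1
    else 0

lemma Xmat_last (N : ℕ) : Xmat (2 * N) (2 * N - 1) = B_A2N N := by
  ext i j
  simp only [Xmat, B_A2N, Matrix.of_apply]
  have hi := i.isLt
  have hj := j.isLt
  split_ifs <;> omega

set_option maxHeartbeats 1000000 in
lemma mutation_step {n : ℕ} (k : ℕ) (h : k + 1 < n) :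
    matrixMutation (Xmat n k) ⟨k + 1, h⟩ = Xmat n (k + 1) := by
  ext i j
  have hi := i.isLt
  have hj := j.isLt
  simp only [matrixMutation, Xmat, Matrix.of_apply, Fin.ext_iff, true_and, and_true, not_and]
  split_ifs <;> first | omega | (norm_num <;> first | omega | exact ‹False›.elim)

set_option maxHeartbeats 1000000 in
lemma mutation_base {n : ℕ} (hn : 2 ≤ n) (h0 : 0 < n) :
    matrixMutation (Xmat n (n - 1)) ⟨0, h0⟩ = Xmat n 0 := by
  ext i j
  have hi := i.isLt
  have hj := j.isLt
  simp only [matrixMutation, Xmat, Matrix.of_apply, Fin.ext_iff, true_and, and_true, not_and]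
  split_ifs <;> first | omega | (norm_num <;> first | omega | exact ‹False›.elim)

lemma loop_lemma {n : ℕ} (j : ℕ) : ∀ k : ℕ, (hk : k + 1 + j = n) →
    Fin.foldl.loop n matrixMutation (Xmat n k) (k + 1) = Xmat n (n - 1) := by
  induction j with
  | zero =>
    intro k hk
    subst hk
    rw [Fin.foldl.loop, dif_neg (by omega)]
    congr 1 <;> omega
  | succ j ih =>
    intro k hk
    have h1 : k + 1 < n := by omega
    rw [Fin.foldl.loop, dif_pos h1, mutation_step k h1]
    exact ih (k + 1) (by omega)

/-- For every `N ≥ 1`, the exchange matrix of type `A_{2N}` satisfies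
`μ_{2N} ⋯ μ₂ μ₁ (B) = B`, where `μ₁` is applied first. -/
theorem A2N_mutation_periodic (N : ℕ) (hN : 1 ≤ N) :
    Fin.foldl (2 * N) matrixMutation (B_A2N N) = B_A2N N := by
  have hn : 2 ≤ 2 * N := by omega
  have h0 : 0 < 2 * N := by omega
  show Fin.foldl.loop (2 * N) matrixMutation (B_A2N N) 0 = B_A2N N
  rw [Fin.foldl.loop, dif_pos h0, ← Xmat_last N, mutation_base hn h0]
  exact loop_lemma (2 * N - 1) 0 (by omega)
end

section
/- The type A₂ cluster map φ(x₁,x₂) = ((1+x₂)/x₁, (x₁+1+x₂)/(x₁x₂)) on the field of rational functions ℚ(x₁,x₂) is periodic with period 5: φ⁵ = id. -/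
/-- The field of rational functions `ℚ(x₁, x₂)`. -/
abbrev QFun2 := FractionRing (MvPolynomial (Fin 2) ℚ)

/-- The type `A₂` cluster map `φ(x₁,x₂) = ((1+x₂)/x₁, (x₁+1+x₂)/(x₁x₂))`. -/
noncomputable def phiA2 : QFun2 × QFun2 → QFun2 × QFun2 :=
  fun p => ((1 + p.2) / p.1, (p.1 + 1 + p.2) / (p.1 * p.2))

set_option maxHeartbeats 1000000 in
/-- The type `A₂` cluster map is periodic with period 5. -/
theorem A2_cluster_map_period_five :
    phiA2^[5]
      (algebraMap (MvPolynomial (Fin 2) ℚ) QFun2 (MvPolynomial.X 0),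
       algebraMap (MvPolynomial (Fin 2) ℚ) QFun2 (MvPolynomial.X 1)) =
      (algebraMap (MvPolynomial (Fin 2) ℚ) QFun2 (MvPolynomial.X 0),
       algebraMap (MvPolynomial (Fin 2) ℚ) QFun2 (MvPolynomial.X 1)) := by
  have hinj : Function.Injective (algebraMap (MvPolynomial (Fin 2) ℚ) QFun2) :=
    IsFractionRing.injective _ _
  set f := algebraMap (MvPolynomial (Fin 2) ℚ) QFun2 with hf
  have key : ∀ p : MvPolynomial (Fin 2) ℚ,
      MvPolynomial.eval (fun _ => (1 : ℚ)) p ≠ 0 → f p ≠ 0 := by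
    intro p hp h
    apply hp
    have hp0 : p = 0 := hinj (by simpa using h)
    simp [hp0]
  set x := f (MvPolynomial.X 0) with hxdef
  set y := f (MvPolynomial.X 1) with hydef
  have hx : x ≠ 0 := key _ (by simp)
  have hy : y ≠ 0 := key _ (by simp)
  have h1y : (1 : QFun2) + y ≠ 0 := by
    have := key (1 + MvPolynomial.X 1) (by simp)
    simpa [map_add] using this
  have h1x : (1 : QFun2) + x ≠ 0 := by
    have := key (1 + MvPolynomial.X 0) (by simp)
    simpa [map_add] using this
  have hxy1 : x + 1 + y ≠ 0 := by
    have := key (MvPolynomial.X 0 + 1 + MvPolynomial.X 1) (by norm_num)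
    simpa [map_add] using this
  set a : QFun2 := (1 + y) / x with ha_def
  set b : QFun2 := (x + 1 + y) / (x * y) with hb_def
  set c : QFun2 := (1 + x) / y with hc_def
  have ha : a ≠ 0 := div_ne_zero h1y hx
  have hb : b ≠ 0 := div_ne_zero hxy1 (mul_ne_zero hx hy)
  have hc : c ≠ 0 := div_ne_zero h1x hy
  have s1 : phiA2 (x, y) = (a, b) := rfl
  have s2 : phiA2 (a, b) = (c, x) := by
    simp only [phiA2, ha_def, hb_def, hc_def, Prod.mk.injEq]
    constructor
    · field_simp
      try ring
    · field_simp
      try ring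
  have s3 : phiA2 (c, x) = (y, a) := by
    simp only [phiA2, ha_def, hc_def, Prod.mk.injEq]
    constructor
    · field_simp
      try ring
    · field_simp
      try ring
  have s4 : phiA2 (y, a) = (b, c) := by
    simp only [phiA2, ha_def, hb_def, hc_def, Prod.mk.injEq]
    constructor
    · field_simp
      try ring
    · field_simp
      try ring
  have s5 : phiA2 (b, c) = (x, y) := by
    simp only [phiA2, hb_def, hc_def, Prod.mk.injEq]
    constructor
    · field_simp
      try ring
    · field_simp
      try ring
  show phiA2^[5] (x, y) = (x, y)
  simp only [Function.iterate_succ, Function.iterate_zero, Function.comp_apply, id_eq]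
  rw [s1, s2, s3, s4, s5]
end

section
/- The type A₄ cluster map φ: (x₁,x₂,x₃,x₄) ↦ (x₁',x₂',x₃',x₄') defined by x₁' = (1+x₂)/x₁, x₂' = (1+x₁'x₃)/x₂, x₃' = (1+x₂'x₄)/x₃, x₄' = (1+x₃')/x₄ is periodic with period 7: φ⁷ = id on ℚ(x₁,x₂,x₃,x₄). -/
/-- The field of rational functions `ℚ(x₁, x₂, x₃, x₄)`. -/
abbrev QFun4 := FractionRing (MvPolynomial (Fin 4) ℚ)

/-- The type `A₄` cluster map: `x₁' = (1+x₂)/x₁`, `x₂' = (1+x₁'x₃)/x₂`,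
`x₃' = (1+x₂'x₄)/x₃`, `x₄' = (1+x₃')/x₄`. -/
noncomputable def phiA4 : (Fin 4 → QFun4) → (Fin 4 → QFun4) := fun x =>
  let x1' := (1 + x 1) / x 0
  let x2' := (1 + x1' * x 2) / x 1
  let x3' := (1 + x2' * x 3) / x 2
  let x4' := (1 + x3') / x 3
  ![x1', x2', x3', x4']

lemma nz_of_eval (p : MvPolynomial (Fin 4) ℚ)
    (h : MvPolynomial.eval (fun _ => (1:ℚ)) p ≠ 0) :
    algebraMap (MvPolynomial (Fin 4) ℚ) QFun4 p ≠ 0 := by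
  intro h0
  apply h
  have hp : p = 0 := IsFractionRing.injective (MvPolynomial (Fin 4) ℚ) QFun4 (by simpa using h0)
  simp [hp]

lemma phiA4_step (u0 u1 u2 u3 v0 v1 v2 v3 : QFun4)
    (h0 : u0 ≠ 0) (h1 : u1 ≠ 0) (h2 : u2 ≠ 0) (h3 : u3 ≠ 0)
    (e0 : v0 * u0 = 1 + u1) (e1 : v1 * u1 = 1 + v0 * u2)
    (e2 : v2 * u2 = 1 + v1 * u3) (e3 : v3 * u3 = 1 + v2) :
    phiA4 ![u0, u1, u2, u3] = ![v0, v1, v2, v3] := by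
  have f0 : (1 + u1) / u0 = v0 := by rw [div_eq_iff h0]; exact e0.symm
  have f1 : (1 + v0 * u2) / u1 = v1 := by rw [div_eq_iff h1]; exact e1.symm
  have f2 : (1 + v1 * u3) / u2 = v2 := by rw [div_eq_iff h2]; exact e2.symm
  have f3 : (1 + v2) / u3 = v3 := by rw [div_eq_iff h3]; exact e3.symm
  funext i
  fin_cases i <;>
    simp only [phiA4, Matrix.cons_val_zero, Matrix.cons_val_one, Matrix.head_cons,
      Matrix.cons_val_two, Matrix.tail_cons, Matrix.cons_val_three, Fin.isValue] <;>
    simp only [f0, f1, f2, f3]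

/-- One cluster-map step expressed through division-free polynomial identities,
where `uᵢ = pᵢ / qᵢ` and `vᵢ = rᵢ / sᵢ`. -/
lemma phiA4_step' (p0 p1 p2 p3 q0 q1 q2 q3 r0 r1 r2 r3 s0 s1 s2 s3 : QFun4)
    (hp0 : p0 ≠ 0) (hp1 : p1 ≠ 0) (hp2 : p2 ≠ 0) (hp3 : p3 ≠ 0)
    (hq0 : q0 ≠ 0) (hq1 : q1 ≠ 0) (hq2 : q2 ≠ 0) (hq3 : q3 ≠ 0)
    (hs0 : s0 ≠ 0) (hs1 : s1 ≠ 0) (hs2 : s2 ≠ 0) (hs3 : s3 ≠ 0)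
    (E0 : r0 * p0 * q1 = (q1 + p1) * (s0 * q0))
    (E1 : r1 * p1 * (s0 * q2) = (s0 * q2 + r0 * p2) * (s1 * q1))
    (E2 : r2 * p2 * (s1 * q3) = (s1 * q3 + r1 * p3) * (s2 * q2))
    (E3 : r3 * p3 * s2 = (s2 + r2) * (s3 * q3)) :
    phiA4 ![p0 / q0, p1 / q1, p2 / q2, p3 / q3] = ![r0 / s0, r1 / s1, r2 / s2, r3 / s3] := by
  apply phiA4_step _ _ _ _ _ _ _ _ (div_ne_zero hp0 hq0) (div_ne_zero hp1 hq1)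
    (div_ne_zero hp2 hq2) (div_ne_zero hp3 hq3)
  · rw [div_mul_div_comm, one_add_div hq1, div_eq_div_iff (mul_ne_zero hs0 hq0) hq1]
    exact E0
  · rw [div_mul_div_comm, div_mul_div_comm, one_add_div (mul_ne_zero hs0 hq2),
      div_eq_div_iff (mul_ne_zero hs1 hq1) (mul_ne_zero hs0 hq2)]
    exact E1
  · rw [div_mul_div_comm, div_mul_div_comm, one_add_div (mul_ne_zero hs1 hq3),
      div_eq_div_iff (mul_ne_zero hs2 hq2) (mul_ne_zero hs1 hq3)]
    exact E2
  · rw [div_mul_div_comm, one_add_div hs2, div_eq_div_iff (mul_ne_zero hs3 hq3) hs2]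
    exact E3

set_option maxHeartbeats 1000000 in
lemma A4_orbit (a b c d : QFun4) (ha : a ≠ 0) (hb : b ≠ 0) (hc : c ≠ 0) (hd : d ≠ 0)
    (hn1 : (1 + b) ≠ (0:QFun4))
    (hn2 : (c + b*c + a) ≠ (0:QFun4))
    (hn3 : (c*d + b*c*d + a*d + a*b) ≠ (0:QFun4))
    (hn4 : (c*d + b*c*d + a*d + a*b + a*b*c) ≠ (0:QFun4))
    (hn5 : (c + a) ≠ (0:QFun4))
    (hn6 : (c*d + a*d + a*b) ≠ (0:QFun4))
    (hn7 : (c*d + a*d + a*b + a*b*c) ≠ (0:QFun4))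
    (hn8 : (d + b) ≠ (0:QFun4))
    (hn9 : (d + b + b*c) ≠ (0:QFun4))
    (hn10 : (1 + c) ≠ (0:QFun4))
    : phiA4^[7] ![a / 1, b / 1, c / 1, d / 1] = ![a / 1, b / 1, c / 1, d / 1] := by
  have step0 := phiA4_step' (a) (b) (c) (d) (1) (1) (1) (1) (1 + b) (c + b*c + a) (c*d + b*c*d + a*d + a*b) (c*d + b*c*d + a*d + a*b + a*b*c) (a) (a*b) (a*b*c) (a*b*c*d)
    ha hb hc hd one_ne_zero one_ne_zero one_ne_zero one_ne_zero ha (mul_ne_zero ha hb) (mul_ne_zero (mul_ne_zero ha hb) hc) (mul_ne_zero (mul_ne_zero (mul_ne_zero ha hb) hc) hd) (by ring) (by ring) (by ring) (by ring)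
  have step1 := phiA4_step' (1 + b) (c + b*c + a) (c*d + b*c*d + a*d + a*b) (c*d + b*c*d + a*d + a*b + a*b*c) (a) (a*b) (a*b*c) (a*b*c*d) (c + a) (c*d + a*d + a*b) (c*d + a*d + a*b + a*b*c) (a) (b) (b*c) (b*c*d) (1)
    hn1 hn2 hn3 hn4 ha (mul_ne_zero ha hb) (mul_ne_zero (mul_ne_zero ha hb) hc) (mul_ne_zero (mul_ne_zero (mul_ne_zero ha hb) hc) hd) hb (mul_ne_zero hb hc) (mul_ne_zero (mul_ne_zero hb hc) hd) one_ne_zero (by ring) (by ring) (by ring) (by ring)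
  have step2 := phiA4_step' (c + a) (c*d + a*d + a*b) (c*d + a*d + a*b + a*b*c) (a) (b) (b*c) (b*c*d) (1) (d + b) (d + b + b*c) (b) (1 + b) (c) (c*d) (1) (a)
    hn5 hn6 hn7 ha hb (mul_ne_zero hb hc) (mul_ne_zero (mul_ne_zero hb hc) hd) one_ne_zero hc (mul_ne_zero hc hd) one_ne_zero ha (by ring) (by ring) (by ring) (by ring)
  have step3 := phiA4_step' (d + b) (d + b + b*c) (b) (1 + b) (c) (c*d) (1) (a) (1 + c) (c) (c + b*c + a) (c + a) (d) (1) (a*b) (b)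
    hn8 hn9 hb hn1 hc (mul_ne_zero hc hd) one_ne_zero ha hd one_ne_zero (mul_ne_zero ha hb) hb (by ring) (by ring) (by ring) (by ring)
  have step4 := phiA4_step' (1 + c) (c) (c + b*c + a) (c + a) (d) (1) (a*b) (b) (d) (c*d + b*c*d + a*d + a*b) (c*d + a*d + a*b) (d + b) (1) (a*b*c) (b*c) (c)
    hn10 hc hn2 hn5 hd one_ne_zero (mul_ne_zero ha hb) hb one_ne_zero (mul_ne_zero (mul_ne_zero ha hb) hc) (mul_ne_zero hb hc) hc (by ring) (by ring) (by ring) (by ring)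
  have step5 := phiA4_step' (d) (c*d + b*c*d + a*d + a*b) (c*d + a*d + a*b) (d + b) (1) (a*b*c) (b*c) (c) (c*d + b*c*d + a*d + a*b + a*b*c) (c*d + a*d + a*b + a*b*c) (d + b + b*c) (1 + c) (a*b*c*d) (b*c*d) (c*d) (d)
    hd hn3 hn6 hn8 one_ne_zero (mul_ne_zero (mul_ne_zero ha hb) hc) (mul_ne_zero hb hc) hc (mul_ne_zero (mul_ne_zero (mul_ne_zero ha hb) hc) hd) (mul_ne_zero (mul_ne_zero hb hc) hd) (mul_ne_zero hc hd) hd (by ring) (by ring) (by ring) (by ring)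
  have step6 := phiA4_step' (c*d + b*c*d + a*d + a*b + a*b*c) (c*d + a*d + a*b + a*b*c) (d + b + b*c) (1 + c) (a*b*c*d) (b*c*d) (c*d) (d) (a) (b) (c) (d) (1) (1) (1) (1)
    hn4 hn7 hn9 hn10 (mul_ne_zero (mul_ne_zero (mul_ne_zero ha hb) hc) hd) (mul_ne_zero (mul_ne_zero hb hc) hd) (mul_ne_zero hc hd) hd one_ne_zero one_ne_zero one_ne_zero one_ne_zero (by ring) (by ring) (by ring) (by ring)
  simp only [Function.iterate_succ_apply', Function.iterate_zero_apply]
  rw [step0, step1, step2, step3, step4, step5, step6]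

set_option maxHeartbeats 1000000 in
/-- The type `A₄` cluster map is periodic with period 7. -/
theorem A4_cluster_map_period_seven :
    phiA4^[7] (fun i => algebraMap (MvPolynomial (Fin 4) ℚ) QFun4 (MvPolynomial.X i)) =
      fun i => algebraMap (MvPolynomial (Fin 4) ℚ) QFun4 (MvPolynomial.X i) := by
  have h0 : (fun i => algebraMap (MvPolynomial (Fin 4) ℚ) QFun4 (MvPolynomial.X i))
      = ![algebraMap (MvPolynomial (Fin 4) ℚ) QFun4 (MvPolynomial.X 0) / 1,
          algebraMap (MvPolynomial (Fin 4) ℚ) QFun4 (MvPolynomial.X 1) / 1,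
          algebraMap (MvPolynomial (Fin 4) ℚ) QFun4 (MvPolynomial.X 2) / 1,
          algebraMap (MvPolynomial (Fin 4) ℚ) QFun4 (MvPolynomial.X 3) / 1] := by
    funext i; fin_cases i <;> simp
  rw [h0]
  rw [A4_orbit _ _ _ _
    (nz_of_eval _ (by norm_num)) (nz_of_eval _ (by norm_num))
    (nz_of_eval _ (by norm_num)) (nz_of_eval _ (by norm_num))
    (by
      have := nz_of_eval (1 + MvPolynomial.X 1) (by norm_num)
      simpa only [map_add, map_mul, map_one] using this)
    (by
      have := nz_of_eval (MvPolynomial.X 2 + MvPolynomial.X 1 * MvPolynomial.X 2 + MvPolynomial.X 0) (by norm_num)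
      simpa only [map_add, map_mul, map_one] using this)
    (by
      have := nz_of_eval (MvPolynomial.X 2 * MvPolynomial.X 3 + MvPolynomial.X 1 * MvPolynomial.X 2 * MvPolynomial.X 3 + MvPolynomial.X 0 * MvPolynomial.X 3 + MvPolynomial.X 0 * MvPolynomial.X 1) (by norm_num)
      simpa only [map_add, map_mul, map_one] using this)
    (by
      have := nz_of_eval (MvPolynomial.X 2 * MvPolynomial.X 3 + MvPolynomial.X 1 * MvPolynomial.X 2 * MvPolynomial.X 3 + MvPolynomial.X 0 * MvPolynomial.X 3 + MvPolynomial.X 0 * MvPolynomial.X 1 + MvPolynomial.X 0 * MvPolynomial.X 1 * MvPolynomial.X 2) (by norm_num)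
      simpa only [map_add, map_mul, map_one] using this)
    (by
      have := nz_of_eval (MvPolynomial.X 2 + MvPolynomial.X 0) (by norm_num)
      simpa only [map_add, map_mul, map_one] using this)
    (by
      have := nz_of_eval (MvPolynomial.X 2 * MvPolynomial.X 3 + MvPolynomial.X 0 * MvPolynomial.X 3 + MvPolynomial.X 0 * MvPolynomial.X 1) (by norm_num)
      simpa only [map_add, map_mul, map_one] using this)
    (by
      have := nz_of_eval (MvPolynomial.X 2 * MvPolynomial.X 3 + MvPolynomial.X 0 * MvPolynomial.X 3 + MvPolynomial.X 0 * MvPolynomial.X 1 + MvPolynomial.X 0 * MvPolynomial.X 1 * MvPolynomial.X 2) (by norm_num)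
      simpa only [map_add, map_mul, map_one] using this)
    (by
      have := nz_of_eval (MvPolynomial.X 3 + MvPolynomial.X 1) (by norm_num)
      simpa only [map_add, map_mul, map_one] using this)
    (by
      have := nz_of_eval (MvPolynomial.X 3 + MvPolynomial.X 1 + MvPolynomial.X 1 * MvPolynomial.X 2) (by norm_num)
      simpa only [map_add, map_mul, map_one] using this)
    (by
      have := nz_of_eval (1 + MvPolynomial.X 2) (by norm_num)
      simpa only [map_add, map_mul, map_one] using this)]
end

section
/- The deformed type A₂ map ψ(x₁,x₂) = ((1+a₁x₂)/x₁, (x₁+a₂(1+a₁x₂))/(x₁x₂)) preserves the log-canonical symplectic form ω = d log x₁ ∧ d log x₂, i.e. ψ*ω = ω. Equivalently, the Jacobian determinant of ψ at (x₁,x₂) equals (x₁'x₂')/(x₁x₂) where (x₁',x₂') = ψ(x₁,x₂). -/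
/-- The deformed type `A₂` map `ψ(x₁,x₂) = ((1+a₁x₂)/x₁, (x₁+a₂(1+a₁x₂))/(x₁x₂))`
preserves the log-canonical symplectic form `ω = d log x₁ ∧ d log x₂`, expressed as:
its Jacobian determinant at `(x₁,x₂)` equals `x₁'x₂'/(x₁x₂)`. -/
theorem deformedA2_symplectic (a₁ a₂ x y : ℝ) (ha₁ : a₁ ≠ 0) (ha₂ : a₂ ≠ 0)
    (hx : x ≠ 0) (hy : y ≠ 0) :
    let f1 : ℝ → ℝ → ℝ := fun u v => (1 + a₁ * v) / u
    let f2 : ℝ → ℝ → ℝ := fun u v => (u + a₂ * (1 + a₁ * v)) / (u * v)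
    Matrix.det !![deriv (fun t => f1 t y) x, deriv (fun t => f1 x t) y;
                  deriv (fun t => f2 t y) x, deriv (fun t => f2 x t) y] =
      f1 x y * f2 x y / (x * y) := by
  intro f1 f2
  have hxy : x * y ≠ 0 := mul_ne_zero hx hy
  have h11 : deriv (fun t => f1 t y) x = (0 * x - (1 + a₁ * y) * 1) / x ^ 2 :=
    ((hasDerivAt_const x (1 + a₁ * y)).div (hasDerivAt_id x) hx).deriv
  have h12 : deriv (fun t => f1 x t) y = ((0 + a₁ * 1) * x - (1 + a₁ * y) * 0) / x ^ 2 :=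
    (((hasDerivAt_const y (1:ℝ)).add ((hasDerivAt_id y).const_mul a₁)).div
      (hasDerivAt_const y x) hx).deriv
  have h21 : deriv (fun t => f2 t y) x =
      ((1 + a₂ * 0) * (x * y) - (x + a₂ * (1 + a₁ * y)) * (1 * y)) / (x * y) ^ 2 :=
    (((hasDerivAt_id x).add ((hasDerivAt_const x (1 + a₁ * y)).const_mul a₂)).div
      ((hasDerivAt_id x).mul_const y) hxy).deriv
  have h22 : deriv (fun t => f2 x t) y =
      ((0 + a₂ * (0 + a₁ * 1)) * (x * y) - (x + a₂ * (1 + a₁ * y)) * (x * 1)) / (x * y) ^ 2 :=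
    (((hasDerivAt_const y x).add (((hasDerivAt_const y (1:ℝ)).add
      ((hasDerivAt_id y).const_mul a₁)).const_mul a₂)).div
      ((hasDerivAt_id y).const_mul x) hxy).deriv
  simp only [Matrix.det_fin_two_of, h11, h12, h21, h22, f1, f2]
  field_simp
  ring
end

section
/- The second iterate of the deformed A₂ map ψ with generic parameters fails the Laurent property: ψ²(x₁,x₂) has first component (a₁a₂ + a₁x₁ + a₁²a₂x₂ + x₁x₂)/(x₂(1+a₁x₂)), which is not a Laurent polynomial in x₁, x₂ over ℚ(a₁,a₂) (its denominator involves the non-monomial factor 1+a₁x₂ that does not cancel when, e.g., a₁ = 2, a₂ = 3). -/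
set_option synthInstance.maxHeartbeats 1000000
set_option maxHeartbeats 1000000

/-- The coefficient field `ℚ(a₁, a₂)`. -/
abbrev KCoef := FractionRing (MvPolynomial (Fin 2) ℚ)

/-- The field of rational functions `ℚ(a₁,a₂)(x₁, x₂)`. -/
abbrev LFun := FractionRing (MvPolynomial (Fin 2) KCoef)

noncomputable def ca1 : KCoef := algebraMap (MvPolynomial (Fin 2) ℚ) KCoef (MvPolynomial.X 0)
noncomputable def ca2 : KCoef := algebraMap (MvPolynomial (Fin 2) ℚ) KCoef (MvPolynomial.X 1)

noncomputable def A1 : LFun := algebraMap (MvPolynomial (Fin 2) KCoef) LFun (MvPolynomial.C ca1)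
noncomputable def A2 : LFun := algebraMap (MvPolynomial (Fin 2) KCoef) LFun (MvPolynomial.C ca2)
noncomputable def lx1 : LFun := algebraMap (MvPolynomial (Fin 2) KCoef) LFun (MvPolynomial.X 0)
noncomputable def lx2 : LFun := algebraMap (MvPolynomial (Fin 2) KCoef) LFun (MvPolynomial.X 1)

/-- The deformed type `A₂` map with parameters `a₁, a₂`. -/
noncomputable def psiDefA2 : LFun × LFun → LFun × LFun :=
  fun p => ((1 + A1 * p.2) / p.1, (p.1 + A2 * (1 + A1 * p.2)) / (p.1 * p.2))

/-- The Laurent polynomial subring `ℚ(a₁,a₂)[x₁^{±1}, x₂^{±1}]` of `ℚ(a₁,a₂)(x₁,x₂)`. -/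
noncomputable def LaurentSubring : Subring LFun :=
  Subring.closure
    (Set.range (fun r : KCoef => algebraMap (MvPolynomial (Fin 2) KCoef) LFun (MvPolynomial.C r))
      ∪ {lx1, lx2, lx1⁻¹, lx2⁻¹})

/-! ### Auxiliary lemmas -/

noncomputable abbrev phiL : MvPolynomial (Fin 2) KCoef →+* LFun :=
  algebraMap (MvPolynomial (Fin 2) KCoef) LFun

lemma phiL_inj : Function.Injective phiL := IsFractionRing.injective _ _

lemma ca1_ne_zero : ca1 ≠ 0 := by
  rw [ca1]
  exact (map_ne_zero_iff _ (IsFractionRing.injective _ _)).mpr (MvPolynomial.X_ne_zero 0)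

lemma ca1_sq_ne_one : ca1 ^ 2 ≠ 1 := by
  intro h
  have h' : algebraMap (MvPolynomial (Fin 2) ℚ) KCoef (MvPolynomial.X 0 ^ 2)
      = algebraMap (MvPolynomial (Fin 2) ℚ) KCoef 1 := by
    simpa [ca1, map_pow] using h
  have h2 := (IsFractionRing.injective (MvPolynomial (Fin 2) ℚ) KCoef) h'
  have hval := congrArg (MvPolynomial.eval (fun _ => (2:ℚ))) h2
  norm_num at hval

lemma lx1_ne_zero : lx1 ≠ 0 := by
  rw [lx1]
  exact (map_ne_zero_iff _ phiL_inj).mpr (MvPolynomial.X_ne_zero 0)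

lemma lx2_ne_zero : lx2 ≠ 0 := by
  rw [lx2]
  exact (map_ne_zero_iff _ phiL_inj).mpr (MvPolynomial.X_ne_zero 1)

lemma one_add_A1_lx2_ne_zero : 1 + A1 * lx2 ≠ 0 := by
  intro h
  have h' : phiL (1 + MvPolynomial.C ca1 * MvPolynomial.X 1) = phiL 0 := by
    simpa [A1, lx2, map_add, map_mul] using h
  have h2 := phiL_inj h'
  have h3 := congrArg (MvPolynomial.eval (fun _ => (0:KCoef))) h2
  simp at h3

lemma laurent_rep {f : LFun} (hf : f ∈ LaurentSubring) :
    ∃ (p : MvPolynomial (Fin 2) KCoef) (m n : ℕ),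
      f * lx1 ^ m * lx2 ^ n = phiL p := by
  induction hf using Subring.closure_induction with
  | mem x hx =>
    rcases hx with ⟨r, rfl⟩ | hx
    · exact ⟨MvPolynomial.C r, 0, 0, by simp⟩
    · simp only [Set.mem_insert_iff, Set.mem_singleton_iff] at hx
      rcases hx with rfl | rfl | rfl | rfl
      · exact ⟨MvPolynomial.X 0, 0, 0, by simp [lx1]⟩
      · exact ⟨MvPolynomial.X 1, 0, 0, by simp [lx2]⟩
      · exact ⟨1, 1, 0, by
          simp [pow_one, map_one, inv_mul_cancel₀ lx1_ne_zero]⟩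
      · exact ⟨1, 0, 1, by
          simp [pow_one, map_one, inv_mul_cancel₀ lx2_ne_zero]⟩
  | zero => exact ⟨0, 0, 0, by simp⟩
  | one => exact ⟨1, 0, 0, by simp⟩
  | add x y hx hy ihx ihy =>
    obtain ⟨p, m, n, hp⟩ := ihx
    obtain ⟨q, m', n', hq⟩ := ihy
    refine ⟨p * MvPolynomial.X 0 ^ m' * MvPolynomial.X 1 ^ n'
      + q * MvPolynomial.X 0 ^ m * MvPolynomial.X 1 ^ n, m + m', n + n', ?_⟩
    have hx1 : phiL (MvPolynomial.X 0) = lx1 := rfl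
    have hx2 : phiL (MvPolynomial.X 1) = lx2 := rfl
    simp only [map_add, map_mul, map_pow, hx1, hx2, ← hp, ← hq]
    ring
  | neg x hx ihx =>
    obtain ⟨p, m, n, hp⟩ := ihx
    exact ⟨-p, m, n, by simp only [map_neg, ← hp]; ring⟩
  | mul x y hx hy ihx ihy =>
    obtain ⟨p, m, n, hp⟩ := ihx
    obtain ⟨q, m', n', hq⟩ := ihy
    refine ⟨p * q, m + m', n + n', ?_⟩
    simp only [map_mul, ← hp, ← hq]
    ring

/-- The second iterate of the deformed `A₂` map fails the Laurent property: its
first component is `(a₁a₂ + a₁x₁ + a₁²a₂x₂ + x₁x₂)/(x₂(1+a₁x₂))`, which is not a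
Laurent polynomial in `x₁, x₂` over `ℚ(a₁,a₂)`. -/
theorem deformedA2_not_Laurent :
    (psiDefA2^[2] (lx1, lx2)).1 =
      (A1 * A2 + A1 * lx1 + A1 ^ 2 * A2 * lx2 + lx1 * lx2) / (lx2 * (1 + A1 * lx2)) ∧
    (psiDefA2^[2] (lx1, lx2)).1 ∉ LaurentSubring := by
  have h1 := lx1_ne_zero
  have h2 := lx2_ne_zero
  have h3 := one_add_A1_lx2_ne_zero
  have heq : (psiDefA2^[2] (lx1, lx2)).1 =
      (A1 * A2 + A1 * lx1 + A1 ^ 2 * A2 * lx2 + lx1 * lx2) / (lx2 * (1 + A1 * lx2)) := by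
    show (psiDefA2 (psiDefA2 (lx1, lx2))).1 = _
    simp only [psiDefA2]
    field_simp
    ring
  refine ⟨heq, ?_⟩
  rw [heq]
  intro hmem
  obtain ⟨p, m, n, hp⟩ := laurent_rep hmem
  set Num : MvPolynomial (Fin 2) KCoef :=
    MvPolynomial.C ca1 * MvPolynomial.C ca2 + MvPolynomial.C ca1 * MvPolynomial.X 0
      + MvPolynomial.C ca1 ^ 2 * MvPolynomial.C ca2 * MvPolynomial.X 1
      + MvPolynomial.X 0 * MvPolynomial.X 1 with hNum
  set Den : MvPolynomial (Fin 2) KCoef :=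
    MvPolynomial.X 1 * (1 + MvPolynomial.C ca1 * MvPolynomial.X 1) with hDen
  have hphiNum : phiL Num = A1 * A2 + A1 * lx1 + A1 ^ 2 * A2 * lx2 + lx1 * lx2 := by
    simp [hNum, A1, A2, lx1, lx2, map_add, map_mul, map_pow]
  have hphiDen : phiL Den = lx2 * (1 + A1 * lx2) := by
    simp [hDen, A1, lx2, map_add, map_mul]
  have hDen_ne : phiL Den ≠ 0 := by
    rw [hphiDen]; exact mul_ne_zero h2 h3
  have key : Num * MvPolynomial.X 0 ^ m * MvPolynomial.X 1 ^ n = p * Den := by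
    apply phiL_inj
    have hp' : (phiL Num / phiL Den) * lx1 ^ m * lx2 ^ n = phiL p := by
      rw [hphiNum, hphiDen]; exact hp
    simp only [map_mul, map_pow]
    have hx1 : phiL (MvPolynomial.X 0) = lx1 := rfl
    have hx2 : phiL (MvPolynomial.X 1) = lx2 := rfl
    rw [hx1, hx2]
    field_simp at hp'
    linear_combination hp'
  have hca1 := ca1_ne_zero
  have hval := congrArg
    (MvPolynomial.eval (fun i : Fin 2 => if i = 0 then (1:KCoef) else -ca1⁻¹)) key
  simp only [hNum, hDen, map_add, map_mul, map_pow, map_one, MvPolynomial.eval_C,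
    MvPolynomial.eval_X] at hval
  norm_num at hval
  have hinv : ca1 * ca1⁻¹ = 1 := mul_inv_cancel₀ hca1
  have hfinal : (ca1 - ca1⁻¹) * (-ca1⁻¹) ^ n = 0 := by
    linear_combination hval + ca1 * ca2 * (-ca1⁻¹) ^ n * hinv
      + ca1⁻¹ * (MvPolynomial.eval (fun i : Fin 2 => if i = 0 then (1:KCoef) else -ca1⁻¹) p) * hinv
  have hne : ca1 - ca1⁻¹ ≠ 0 := by
    intro h
    apply ca1_sq_ne_one
    have h0 : ca1 * (ca1 - ca1⁻¹) = 0 := by rw [h, mul_zero]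
    rw [mul_sub, hinv] at h0
    calc ca1 ^ 2 = ca1 * ca1 := sq ca1
      _ = 1 := by linear_combination h0
  rcases mul_eq_zero.mp hfinal with h | h
  · exact hne h
  · exact pow_ne_zero n (neg_ne_zero.mpr (inv_ne_zero hca1)) h
end

section
/- The Lyness recurrence x_{n+2}x_n = a x_{n+1} + b with nonzero parameters a, b has confined singularities: if x_{n₀} = ε and x_{n₀+1} = u with u generic, then x_{n₀+2} = (au+b)ε^{-1} + O(1), x_{n₀+3} = a(au+b)u^{-1}ε^{-1} + b/u + O(ε), x_{n₀+4} = a²/u + O(ε), x_{n₀+5} = ((a³+bu)/(a(au+b)))ε + O(ε²), and x_{n₀+6} = bu/a² + O(ε); in particular the limits as ε → 0 of x_{n₀+4}, x_{n₀+5}, x_{n₀+6} exist and are finite, with x_{n₀+4}, x_{n₀+6} nonzero for generic u. -/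
/-- The field `ℚ(a, b, u)`. -/
abbrev FLyn := FractionRing (MvPolynomial (Fin 3) ℚ)

noncomputable def la : FLyn := algebraMap (MvPolynomial (Fin 3) ℚ) FLyn (MvPolynomial.X 0)
noncomputable def lb : FLyn := algebraMap (MvPolynomial (Fin 3) ℚ) FLyn (MvPolynomial.X 1)
noncomputable def lu : FLyn := algebraMap (MvPolynomial (Fin 3) ℚ) FLyn (MvPolynomial.X 2)

/-- The small quantity `ε` in the field of formal Laurent series `ℚ(a,b,u)((ε))`. -/
noncomputable def eps : LaurentSeries FLyn := HahnSeries.single (1 : ℤ) (1 : FLyn)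

/-- The Lyness orbit starting from `(x_{n₀}, x_{n₀+1}) = (ε, u)`, with
`x_{n+2} = (a x_{n+1} + b)/x_n`. -/
noncomputable def lynSeq : ℕ → LaurentSeries FLyn
  | 0 => eps
  | 1 => HahnSeries.C lu
  | n + 2 => (HahnSeries.C la * lynSeq (n + 1) + HahnSeries.C lb) / lynSeq n

/- ## Auxiliary lemmas -/

lemma flyn_map_ne_zero {p : MvPolynomial (Fin 3) ℚ} (hp : p ≠ 0) :
    algebraMap (MvPolynomial (Fin 3) ℚ) FLyn p ≠ 0 :=
  (map_ne_zero_iff _ (IsFractionRing.injective (MvPolynomial (Fin 3) ℚ) FLyn)).mpr hp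

lemma la_ne : la ≠ 0 := flyn_map_ne_zero (MvPolynomial.X_ne_zero _)
lemma lb_ne : lb ≠ 0 := flyn_map_ne_zero (MvPolynomial.X_ne_zero _)
lemma lu_ne : lu ≠ 0 := flyn_map_ne_zero (MvPolynomial.X_ne_zero _)

lemma lab_ne : la * lu + lb ≠ 0 := by
  have : la * lu + lb = algebraMap (MvPolynomial (Fin 3) ℚ) FLyn
      (MvPolynomial.X 0 * MvPolynomial.X 2 + MvPolynomial.X 1) := by
    simp [la, lb, lu, map_add, map_mul]
  rw [this]
  apply flyn_map_ne_zero
  intro h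
  have := congrArg (MvPolynomial.eval (fun _ => (1:ℚ))) h
  simp at this

lemma la3_ne : la ^ 3 + lb * lu ≠ 0 := by
  have : la ^ 3 + lb * lu = algebraMap (MvPolynomial (Fin 3) ℚ) FLyn
      (MvPolynomial.X 0 ^ 3 + MvPolynomial.X 1 * MvPolynomial.X 2) := by
    simp [la, lb, lu, map_add, map_mul, map_pow]
  rw [this]
  apply flyn_map_ne_zero
  intro h
  have := congrArg (MvPolynomial.eval (fun _ => (1:ℚ))) h
  simp at this

lemma ord_eq {x : LaurentSeries FLyn} {n : ℤ} (h0 : x.coeff n ≠ 0)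
    (h : ∀ m < n, x.coeff m = 0) : x.order = n := by
  have hx : x ≠ 0 := fun hx => h0 (by simp [hx])
  refine le_antisymm (HahnSeries.order_le_of_coeff_ne_zero h0) ?_
  by_contra hlt
  exact HahnSeries.coeff_order_eq_zero.not.mpr hx (h _ (lt_of_not_ge hlt))

lemma leadC {x : LaurentSeries FLyn} (hx : x ≠ 0) :
    x.leadingCoeff = x.coeff x.order := by
  exact HahnSeries.leadingCoeff_eq

lemma lyn2_eq : lynSeq 2 = HahnSeries.single (-1 : ℤ) (la * lu + lb) := by
  have heps : eps ≠ 0 := HahnSeries.single_ne_zero one_ne_zero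
  show (HahnSeries.C la * HahnSeries.C lu + HahnSeries.C lb) / eps = _
  rw [div_eq_iff heps]
  ext m
  simp only [eps, HahnSeries.C_apply, HahnSeries.single_mul_single,
    HahnSeries.coeff_add, HahnSeries.coeff_single]
  split_ifs <;> first | ring1 | omega | (exfalso; omega)

lemma lyn3_eq : lynSeq 3 = HahnSeries.single (-1 : ℤ) (la * (la * lu + lb) / lu)
    + HahnSeries.single (0 : ℤ) (lb / lu) := by
  have hu := lu_ne
  have hCu : (HahnSeries.C lu : LaurentSeries FLyn) ≠ 0 := by
    rw [HahnSeries.C_apply]; exact HahnSeries.single_ne_zero hu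
  show (HahnSeries.C la * lynSeq 2 + HahnSeries.C lb) / lynSeq 1 = _
  show (HahnSeries.C la * lynSeq 2 + HahnSeries.C lb) / HahnSeries.C lu = _
  rw [lyn2_eq, div_eq_iff hCu]
  ext m
  simp only [HahnSeries.C_apply, HahnSeries.single_mul_single, add_mul,
    HahnSeries.coeff_add, HahnSeries.coeff_single]
  split_ifs <;>
    first | omega | (exfalso; omega) | ring1 | (field_simp; try ring1)

lemma lyn4_eq : lynSeq 4 = HahnSeries.single (0 : ℤ) (la ^ 2 / lu)
    + HahnSeries.single (1 : ℤ) (lb * (la + lu) / (lu * (la * lu + lb))) := by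
  have hu := lu_ne
  have hab := lab_ne
  have h2ne : lynSeq 2 ≠ 0 := by
    rw [lyn2_eq]; exact HahnSeries.single_ne_zero hab
  have hd2 : lu * (la * lu) + lu * lb ≠ 0 := by rw [← mul_add]; exact mul_ne_zero hu hab
  show (HahnSeries.C la * lynSeq 3 + HahnSeries.C lb) / lynSeq 2 = _
  rw [lyn3_eq, lyn2_eq, div_eq_iff (HahnSeries.single_ne_zero hab)]
  ext m
  simp only [HahnSeries.C_apply, HahnSeries.single_mul_single, add_mul, mul_add,
    HahnSeries.coeff_add, HahnSeries.coeff_single]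
  split_ifs <;>
    first | omega | (exfalso; omega) | ring1 | (field_simp; try ring1)

set_option maxHeartbeats 2000000 in
/-- Singularity confinement for the Lyness recurrence `x_{n+2}x_n = a x_{n+1} + b`:
starting from `(ε, u)`, the iterates have the stated Laurent expansions in `ε`, and in
particular `x₄, x₅, x₆` have finite limits as `ε → 0`, with `x₄, x₆` nonzero. -/
theorem lyness_singularity_confinement :
    (∀ m : ℤ, m < -1 → (lynSeq 2).coeff m = 0) ∧
    (lynSeq 2).coeff (-1) = la * lu + lb ∧
    (∀ m : ℤ, m < -1 → (lynSeq 3).coeff m = 0) ∧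
    (lynSeq 3).coeff (-1) = la * (la * lu + lb) / lu ∧
    (lynSeq 3).coeff 0 = lb / lu ∧
    (∀ m : ℤ, m < 0 → (lynSeq 4).coeff m = 0) ∧
    (lynSeq 4).coeff 0 = la ^ 2 / lu ∧
    (∀ m : ℤ, m < 1 → (lynSeq 5).coeff m = 0) ∧
    (lynSeq 5).coeff 1 = (la ^ 3 + lb * lu) / (la * (la * lu + lb)) ∧
    (∀ m : ℤ, m < 0 → (lynSeq 6).coeff m = 0) ∧
    (lynSeq 6).coeff 0 = lb * lu / la ^ 2 ∧
    la ^ 2 / lu ≠ 0 ∧ lb * lu / la ^ 2 ≠ 0 := by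
  have ha := la_ne
  have hb := lb_ne
  have hu := lu_ne
  have hab := lab_ne
  have ha3 := la3_ne
  -- coefficients of x2, x3, x4
  have c2 : ∀ m : ℤ, (lynSeq 2).coeff m = if m = -1 then la * lu + lb else 0 := by
    intro m; rw [lyn2_eq, HahnSeries.coeff_single]; split_ifs <;> rfl
  have c3 : ∀ m : ℤ, (lynSeq 3).coeff m =
      (if m = -1 then la * (la * lu + lb) / lu else 0) + (if m = 0 then lb / lu else 0) := by
    intro m; rw [lyn3_eq, HahnSeries.coeff_add, HahnSeries.coeff_single,
      HahnSeries.coeff_single]; split_ifs <;> first | rfl | (exfalso; omega)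
  have c4 : ∀ m : ℤ, (lynSeq 4).coeff m =
      (if m = 0 then la ^ 2 / lu else 0)
        + (if m = 1 then lb * (la + lu) / (lu * (la * lu + lb)) else 0) := by
    intro m; rw [lyn4_eq, HahnSeries.coeff_add, HahnSeries.coeff_single,
      HahnSeries.coeff_single]; split_ifs <;> first | rfl | (exfalso; omega)
  -- basic nonzero coefficients
  have h3c : (lynSeq 3).coeff (-1) = la * (la * lu + lb) / lu := by rw [c3]; norm_num
  have h3cne : (lynSeq 3).coeff (-1) ≠ 0 := by
    rw [h3c]; exact div_ne_zero (mul_ne_zero ha hab) hu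
  have h3ne : lynSeq 3 ≠ 0 := fun h => h3cne (by simp [h])
  have o3 : (lynSeq 3).order = -1 := by
    refine ord_eq h3cne fun m hm => ?_
    rw [c3]; rw [if_neg (by omega), if_neg (by omega)]; ring
  have h4c : (lynSeq 4).coeff 0 = la ^ 2 / lu := by rw [c4]; norm_num
  have h4cne : (lynSeq 4).coeff 0 ≠ 0 := by
    rw [h4c]; exact div_ne_zero (pow_ne_zero _ ha) hu
  have h4ne : lynSeq 4 ≠ 0 := fun h => h4cne (by simp [h])
  have o4 : (lynSeq 4).order = 0 := by
    refine ord_eq h4cne fun m hm => ?_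
    rw [c4]; rw [if_neg (by omega), if_neg (by omega)]; ring
  -- the numerator for x5
  set N5 : LaurentSeries FLyn := HahnSeries.C la * lynSeq 4 + HahnSeries.C lb with hN5
  have cN5 : ∀ m : ℤ, N5.coeff m = la * (lynSeq 4).coeff m + (if m = 0 then lb else 0) := by
    intro m
    rw [hN5, HahnSeries.coeff_add, HahnSeries.C_apply, HahnSeries.C_apply,
      HahnSeries.coeff_single_zero_mul, HahnSeries.coeff_single]
    split_ifs <;> rfl
  have cN5_0 : N5.coeff 0 = (la ^ 3 + lb * lu) / lu := by
    rw [cN5, h4c]; rw [if_pos rfl]; field_simp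
  have cN5_0ne : N5.coeff 0 ≠ 0 := by
    rw [cN5_0]; exact div_ne_zero ha3 hu
  have N5ne : N5 ≠ 0 := fun h => cN5_0ne (by simp [h])
  have oN5 : N5.order = 0 := by
    refine ord_eq cN5_0ne fun m hm => ?_
    rw [cN5, c4]
    rw [if_neg (by omega), if_neg (by omega), if_neg (by omega)]; ring
  -- x5
  have h5eq : lynSeq 5 * lynSeq 3 = N5 := by
    show (HahnSeries.C la * lynSeq 4 + HahnSeries.C lb) / lynSeq 3 * lynSeq 3 = N5
    rw [div_mul_cancel₀ _ h3ne]
  have h5ne : lynSeq 5 ≠ 0 := by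
    intro h
    rw [h, zero_mul] at h5eq
    exact N5ne h5eq.symm
  have o5 : (lynSeq 5).order = 1 := by
    have := HahnSeries.order_mul h5ne h3ne
    rw [h5eq, oN5, o3] at this
    omega
  have c5lt : ∀ m : ℤ, m < 1 → (lynSeq 5).coeff m = 0 := by
    intro m hm
    exact HahnSeries.coeff_eq_zero_of_lt_order (by rw [o5]; exact hm)
  have c5 : (lynSeq 5).coeff 1 = (la ^ 3 + lb * lu) / (la * (la * lu + lb)) := by
    have hmul := HahnSeries.coeff_mul_order_add_order (lynSeq 5) (lynSeq 3)
    rw [h5eq, o5, o3, leadC h5ne, leadC h3ne, o5, o3] at hmul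
    norm_num at hmul
    rw [cN5_0, h3c] at hmul
    field_simp at hmul
    rw [eq_div_iff (mul_ne_zero ha hab)]
    first | linear_combination hmul | linear_combination -hmul
  -- the numerator for x6
  set N6 : LaurentSeries FLyn := HahnSeries.C la * lynSeq 5 + HahnSeries.C lb with hN6
  have cN6 : ∀ m : ℤ, N6.coeff m = la * (lynSeq 5).coeff m + (if m = 0 then lb else 0) := by
    intro m
    rw [hN6, HahnSeries.coeff_add, HahnSeries.C_apply, HahnSeries.C_apply,
      HahnSeries.coeff_single_zero_mul, HahnSeries.coeff_single]
    split_ifs <;> rfl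
  have cN6_0 : N6.coeff 0 = lb := by
    rw [cN6, c5lt 0 (by norm_num)]; rw [if_pos rfl]; ring
  have cN6_0ne : N6.coeff 0 ≠ 0 := by rw [cN6_0]; exact hb
  have N6ne : N6 ≠ 0 := fun h => cN6_0ne (by simp [h])
  have oN6 : N6.order = 0 := by
    refine ord_eq cN6_0ne fun m hm => ?_
    rw [cN6, c5lt m (by omega)]
    rw [if_neg (by omega)]; ring
  -- x6
  have h6eq : lynSeq 6 * lynSeq 4 = N6 := by
    show (HahnSeries.C la * lynSeq 5 + HahnSeries.C lb) / lynSeq 4 * lynSeq 4 = N6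
    rw [div_mul_cancel₀ _ h4ne]
  have h6ne : lynSeq 6 ≠ 0 := by
    intro h
    rw [h, zero_mul] at h6eq
    exact N6ne h6eq.symm
  have o6 : (lynSeq 6).order = 0 := by
    have := HahnSeries.order_mul h6ne h4ne
    rw [h6eq, oN6, o4] at this
    omega
  have c6lt : ∀ m : ℤ, m < 0 → (lynSeq 6).coeff m = 0 := by
    intro m hm
    exact HahnSeries.coeff_eq_zero_of_lt_order (by rw [o6]; exact hm)
  have c6 : (lynSeq 6).coeff 0 = lb * lu / la ^ 2 := by
    have hmul := HahnSeries.coeff_mul_order_add_order (lynSeq 6) (lynSeq 4)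
    rw [h6eq, o6, o4, leadC h6ne, leadC h4ne, o6, o4] at hmul
    norm_num at hmul
    rw [cN6_0, h4c] at hmul
    field_simp at hmul
    rw [eq_div_iff (pow_ne_zero 2 ha)]
    first | linear_combination hmul | linear_combination -hmul | linear_combination lu * hmul | linear_combination -(lu * hmul)
  refine ⟨?_, ?_, ?_, h3c, ?_, ?_, h4c, c5lt, c5, c6lt, c6, ?_, ?_⟩
  · intro m hm; rw [c2, if_neg (by omega)]
  · rw [c2]; norm_num
  · intro m hm; rw [c3, if_neg (by omega), if_neg (by omega)]; ring
  · rw [c3]; norm_num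
  · intro m hm; rw [c4, if_neg (by omega), if_neg (by omega)]; ring
  · exact div_ne_zero (pow_ne_zero _ ha) hu
  · exact div_ne_zero (mul_ne_zero hb hu) (pow_ne_zero _ ha)
end

section
/- The tau-function system of the Laurentified deformed A₂ map has the Laurent property for its first new variables: given initial data (τ₋₁, τ₀, τ₁, σ₀, σ₁, σ₂, σ₃) and parameters a₁, a₂, the quantities τ₂ = (τ₋₁σ₃ + a₁τ₀σ₂)/σ₀ and σ₄ = (σ₂τ₁ + a₂σ₁τ₂)/τ₋₁ are Laurent polynomials in τ₋₁, τ₀, τ₁, σ₀, σ₁, σ₂, σ₃ with coefficients in ℤ[a₁, a₂]; in particular σ₄ = (σ₀σ₂τ₁ + a₂σ₁σ₃τ₋₁ + a₁a₂σ₁σ₂τ₀)/(σ₀τ₋₁) is Laurent. -/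
/-- The field `ℚ(τ₋₁, τ₀, τ₁, σ₀, σ₁, σ₂, σ₃, a₁, a₂)`. -/
abbrev KTau := FractionRing (MvPolynomial (Fin 9) ℚ)

noncomputable def gen (i : Fin 9) : KTau :=
  algebraMap (MvPolynomial (Fin 9) ℚ) KTau (MvPolynomial.X i)

noncomputable def tm1 : KTau := gen 0  -- τ₋₁
noncomputable def t0 : KTau := gen 1   -- τ₀
noncomputable def t1 : KTau := gen 2   -- τ₁
noncomputable def s0 : KTau := gen 3   -- σ₀
noncomputable def s1 : KTau := gen 4   -- σ₁
noncomputable def s2 : KTau := gen 5   -- σ₂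
noncomputable def s3 : KTau := gen 6   -- σ₃
noncomputable def a1 : KTau := gen 7
noncomputable def a2 : KTau := gen 8

/-- `τ₂ = (τ₋₁σ₃ + a₁τ₀σ₂)/σ₀`. -/
noncomputable def tau2 : KTau := (tm1 * s3 + a1 * t0 * s2) / s0

/-- `σ₄ = (σ₂τ₁ + a₂σ₁τ₂)/τ₋₁`. -/
noncomputable def sigma4 : KTau := (s2 * t1 + a2 * s1 * tau2) / tm1

/-- The Laurent polynomial ring `ℤ[a₁,a₂][τ₋₁^{±},τ₀^{±},τ₁^{±},σ₀^{±},σ₁^{±},σ₂^{±},σ₃^{±}]`. -/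
noncomputable def TauLaurent : Subring KTau :=
  Subring.closure
    ({a1, a2, tm1, tm1⁻¹, t0, t0⁻¹, t1, t1⁻¹, s0, s0⁻¹, s1, s1⁻¹, s2, s2⁻¹, s3, s3⁻¹} : Set KTau)


lemma gen_ne (i : Fin 9) : gen i ≠ 0 := by
  have : MvPolynomial.X (R := ℚ) i ≠ 0 := MvPolynomial.X_ne_zero i
  simpa [gen] using
    (map_ne_zero_iff (algebraMap (MvPolynomial (Fin 9) ℚ) KTau)
      (IsFractionRing.injective _ _)).mpr this

lemma mem_gens : ∀ x ∈ ({a1, a2, tm1, tm1⁻¹, t0, t0⁻¹, t1, t1⁻¹, s0, s0⁻¹, s1, s1⁻¹, s2, s2⁻¹, s3, s3⁻¹} : Set KTau), x ∈ TauLaurent := fun x hx => Subring.subset_closure hx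

/-- The first new tau-variables of the Laurentified deformed `A₂` map are Laurent
polynomials in the initial data; in particular `σ₄` has the stated Laurent form. -/
theorem tau_system_Laurent :
    tau2 ∈ TauLaurent ∧ sigma4 ∈ TauLaurent ∧
    sigma4 = (s0 * s2 * t1 + a2 * s1 * s3 * tm1 + a1 * a2 * s1 * s2 * t0) / (s0 * tm1) := by
  have htm1 : tm1 ≠ 0 := gen_ne 0
  have hs0 : s0 ≠ 0 := gen_ne 3
  have h1 : tau2 = tm1 * s3 * s0⁻¹ + a1 * t0 * s2 * s0⁻¹ := by
    rw [tau2]; field_simp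
  have mem : ∀ x ∈ ({a1, a2, tm1, tm1⁻¹, t0, t0⁻¹, t1, t1⁻¹, s0, s0⁻¹, s1, s1⁻¹, s2, s2⁻¹, s3, s3⁻¹} : Set KTau), x ∈ TauLaurent :=
    fun x hx => Subring.subset_closure hx
  have ha1 := mem a1 (by simp)
  have ha2 := mem a2 (by simp)
  have htm1m := mem tm1 (by simp)
  have htm1i := mem tm1⁻¹ (by simp)
  have ht0 := mem t0 (by simp)
  have ht1 := mem t1 (by simp)
  have hs0m := mem s0 (by simp)
  have hs0i := mem s0⁻¹ (by simp)
  have hs1 := mem s1 (by simp)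
  have hs2 := mem s2 (by simp)
  have hs3 := mem s3 (by simp)
  have htau2 : tau2 ∈ TauLaurent := by
    rw [h1]
    exact add_mem (mul_mem (mul_mem htm1m hs3) hs0i)
      (mul_mem (mul_mem (mul_mem ha1 ht0) hs2) hs0i)
  have h2 : sigma4 = s2 * t1 * tm1⁻¹ + a2 * s1 * tau2 * tm1⁻¹ := by
    rw [sigma4]; field_simp
  refine ⟨htau2, ?_, ?_⟩
  · rw [h2]
    exact add_mem (mul_mem (mul_mem hs2 ht1) htm1i)
      (mul_mem (mul_mem (mul_mem ha2 hs1) htau2) htm1i)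
  · rw [sigma4, tau2]
    field_simp
    ring
end
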